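/- Let (G, w, w') be a finite connected graph with vertex weights w : V(G) → ℝ≥0 and edge weights w' : E(G) → ℝ≥0, and let {F_1, …, F_k} be a c-partition of E(G). For each i define λ_i : V(G_i) → ℝ≥0 by λ_i(X) = Σ_{x ∈ V(X)} w(x) and λ_i' : E(G_i) → ℝ≥0 by λ_i'(E) = Σ_{e ∈ Ê} w'(e), where G_i = G/F_i. Then the weighted Mostar index satisfies Mo(G, w, w') = Σ_{i=1}^{k} Mo(G_i, λ_i, λ_i'). -/

import Mathlib

open SimpleGraph

noncomputable section

/-- The Djoković–Winkler relation `Θ` on the edges of a graph `G`: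
edges `e = xy` and `f = ab` are related iff
`d(x,a) + d(y,b) ≠ d(x,b) + d(y,a)`. -/
def theta {V : Type*} (G : SimpleGraph V) (e f : Sym2 V) : Prop :=
  e ∈ G.edgeSet ∧ f ∈ G.edgeSet ∧
    ∃ x y a b : V, e = s(x, y) ∧ f = s(a, b) ∧
      G.dist x a + G.dist y b ≠ G.dist x b + G.dist y a

/-- The quotient graph `G/F`: its vertices are the connected components of
`G − F`, two components being adjacent iff some vertex of one is adjacent in
`G` to some vertex of the other. -/
def quotientGraph {V : Type*} (G : SimpleGraph V) (F : Set (Sym2 V)) :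
    SimpleGraph (G.deleteEdges F).ConnectedComponent where
  Adj X Y := X ≠ Y ∧ ∃ x y : V,
    (G.deleteEdges F).connectedComponentMk x = X ∧
    (G.deleteEdges F).connectedComponentMk y = Y ∧ G.Adj x y
  symm := by
    refine ⟨?_⟩
    rintro X Y ⟨hne, x, y, hx, hy, hadj⟩
    exact ⟨hne.symm, y, x, hy, hx, hadj.symm⟩
  loopless := by
    refine ⟨?_⟩
    rintro X ⟨hne, -⟩
    exact hne rfl

/-- `F₁, …, F_k` is a partition of the edge set of `G`. -/
def IsEdgePartition {V : Type*} (G : SimpleGraph V) {k : ℕ}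
    (F : Fin k → Set (Sym2 V)) : Prop :=
  (∀ i, F i ⊆ G.edgeSet) ∧ (∀ e ∈ G.edgeSet, ∃ i, e ∈ F i) ∧
    (∀ i j, i ≠ j → Disjoint (F i) (F j))

/-- `F₁, …, F_k` is a c-partition of the edge set of `G`: a partition such
that every `Θ*`-class (class of the transitive closure of `Θ`) is contained
in some part. -/
def IsCPartition {V : Type*} (G : SimpleGraph V) {k : ℕ}
    (F : Fin k → Set (Sym2 V)) : Prop :=
  IsEdgePartition G F ∧
    ∀ e f : Sym2 V, Relation.TransGen (theta G) e f → ∀ i, e ∈ F i → f ∈ F i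

/-- For an edge `e = uv`, `nW G w u v` is `n_u(e|(G,w))`, the sum of the
weights of the vertices strictly closer to `u` than to `v`. -/
def nW {V : Type*} (G : SimpleGraph V) (w : V → NNReal) (u v : V) : NNReal :=
  ∑ᶠ x ∈ {x : V | G.dist x u < G.dist x v}, w x

/-- The Mostar index of a vertex-edge-weighted graph `(G, w, w')`. -/
def MostarW {V : Type*} (G : SimpleGraph V) (w : V → NNReal)
    (w' : Sym2 V → NNReal) : ℝ :=
  ∑ᶠ e ∈ G.edgeSet, (w' e : ℝ) *
    Sym2.lift ⟨fun u v => |((nW G w u v : ℝ)) - ((nW G w v u : ℝ))|,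
      fun _ _ => abs_sub_comm _ _⟩ e

/-- The (unweighted) Mostar index of a graph `G`. -/
def Mostar {V : Type*} (G : SimpleGraph V) : ℝ :=
  ∑ᶠ e ∈ G.edgeSet,
    Sym2.lift ⟨fun u v =>
      |((Nat.card {x : V | G.dist x u < G.dist x v} : ℝ)) -
        ((Nat.card {x : V | G.dist x v < G.dist x u} : ℝ))|,
      fun _ _ => abs_sub_comm _ _⟩ e

/-!
The heart of the proof is the Graham–Winkler formula `d_G(x, y) = ∑ i, d_{G_i}(x_i, y_i)`.
Let `p` be a geodesic from `x` to `y` with `n_i` edges in `F_i`. Projecting `p` gives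
`d_{G_i}(x_i, y_i) ≤ n_i`. Conversely, the potential `z ↦ ∑ (d(z, a) - d(z, b))`, summed
over the darts `ab` of `p` in `F_i`, is constant on the components of `G - F_i` (an edge
outside `F_i` is not in relation `Θ` with an edge of `F_i`), equals `-n_i` at `x` and `n_i`
at `y`, and, by telescoping along `p`, changes by at most `2` across an edge of `F_i`; hence
`2 n_i ≤ 2 d_{G_i}(x_i, y_i)`.

For an edge `uv ∈ F_i`, `u` and `v` lie in the same component of `G - F_j` for every `j ≠ i`,
so the formula gives `d(x, u) - d(x, v) = d_{G_i}(x_i, u_i) - d_{G_i}(x_i, v_i)`. Thus the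
vertices closer to `u` than to `v` are exactly those whose component is closer to `u_i` than
to `v_i`, i.e. `n_u(e) = n_{u_i}(e_i)` for the weights `λ_i`. The edges of `F_i` are exactly
those mapped onto edges of `G_i`, so grouping them by their image `E` turns their weights into
`λ_i'(E)`, and summing over the parts gives the theorem.
-/

open scoped Classical

lemma NNReal.coe_finsum_mem {α : Type*} {s : Set α} (hs : s.Finite) (f : α → NNReal) :
    ((∑ᶠ x ∈ s, f x : NNReal) : ℝ) = ∑ᶠ x ∈ s, (f x : ℝ) :=
  (NNReal.toRealHom : NNReal →+ ℝ).map_finsum_mem f hs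

lemma finsum_mem_fiberwise {α β M : Type*} [AddCommMonoid M] {s : Set α} {t : Set β}
    (hs : s.Finite) (ht : t.Finite) (f : α → β) (g : α → M) :
    ∑ᶠ y ∈ t, ∑ᶠ x ∈ {x | x ∈ s ∧ f x = y}, g x = ∑ᶠ x ∈ s ∩ f ⁻¹' t, g x := by
  have hfib : s ∩ f ⁻¹' t = ⋃ y ∈ t, {x | x ∈ s ∧ f x = y} := by
    ext x
    simp
  rw [hfib, finsum_mem_biUnion
    (fun y _ z _ hyz => Set.disjoint_left.mpr fun x hy hz => hyz (hy.2.symm.trans hz.2)) ht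
    fun _ _ => hs.subset fun _ hx => hx.1]

namespace SimpleGraph

variable {V : Type*} {G : SimpleGraph V} {F : Set (Sym2 V)}

def distDiff (G : SimpleGraph V) (a b x : V) : ℤ := G.dist x a - G.dist x b

lemma abs_distDiff_le_one {a b : V} (hab : G.Adj a b) (x : V) : |G.distDiff a b x| ≤ 1 := by
  rw [distDiff, abs_le]
  rcases hab.diff_dist_adj (u := x) with h | h | h <;> omega

lemma theta_of_distDiff_ne {a b c d : V} (hab : G.Adj a b) (hcd : G.Adj c d)
    (h : G.distDiff a b c ≠ G.distDiff a b d) : theta G s(a, b) s(c, d) := by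
  refine ⟨hab, hcd, a, b, c, d, rfl, rfl, fun h' => h ?_⟩
  simp only [distDiff, dist_comm (v := a), dist_comm (v := b)]
  omega

lemma Walk.reachable_fst_of_mem_darts {x y : V} {p : G.Walk x y} {D : G.Dart}
    (hD : D ∈ p.darts) : G.Reachable x D.fst :=
  (p.takeUntil D.fst (p.dart_fst_mem_support_of_mem_darts hD)).reachable

lemma Walk.dist_add_one_add_dist_of_mem_darts {x y : V} {p : G.Walk x y}
    (hp : p.length = G.dist x y) {D : G.Dart} (hD : D ∈ p.darts) :
    G.dist x D.fst + 1 + G.dist D.snd y = G.dist x y := by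
  refine le_antisymm ?_ ?_
  · induction p with
    | nil => simp at hD
    | @cons x w y h q ih =>
      have hxw : G.dist x w = 1 := dist_eq_one_iff_adj.mpr h
      have hxy := h.reachable.dist_triangle_left y
      rw [Walk.length_cons] at hp
      have hq : q.length = G.dist w y := by
        have := dist_le q
        omega
      rw [Walk.darts_cons, List.mem_cons] at hD
      rcases hD with rfl | hD
      · simp only [dist_self]
        omega
      · have := ih hq hD
        have := h.reachable.dist_triangle_left D.fst
        omega
  · have := (reachable_fst_of_mem_darts hD).dist_triangle_left y
    have := D.adj.reachable.dist_triangle_left y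
    have := dist_eq_one_iff_adj.mpr D.adj
    omega

lemma Walk.distDiff_start_of_mem_darts {x y : V} {p : G.Walk x y}
    (hp : p.length = G.dist x y) {D : G.Dart} (hD : D ∈ p.darts) :
    G.distDiff D.fst D.snd x = -1 := by
  have hreach := reachable_fst_of_mem_darts hD
  have := dist_add_one_add_dist_of_mem_darts hp hD
  have := (hreach.trans D.adj.reachable).dist_triangle_left y
  have := hreach.dist_triangle_left D.snd
  have := dist_eq_one_iff_adj.mpr D.adj
  rw [distDiff]
  omega

lemma Walk.distDiff_end_of_mem_darts {x y : V} {p : G.Walk x y}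
    (hp : p.length = G.dist x y) {D : G.Dart} (hD : D ∈ p.darts) :
    G.distDiff D.fst D.snd y = 1 := by
  have := dist_add_one_add_dist_of_mem_darts hp hD
  have := (reachable_fst_of_mem_darts hD).dist_triangle_left y
  have := D.adj.reachable.dist_triangle_left y
  have := dist_eq_one_iff_adj.mpr D.adj
  rw [distDiff, dist_comm (u := y), dist_comm (u := y)]
  omega

lemma Walk.sum_darts_sub {M : Type*} [AddCommGroup M] {x y : V} (p : G.Walk x y) (g : V → M) :
    (p.darts.map fun D => g D.fst - g D.snd).sum = g x - g y := by
  induction p with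
  | nil => simp
  | cons h q ih => simp [ih]

lemma Reachable.abs_sub_le_dist_nsmul {M : Type*} [AddCommGroup M] [LinearOrder M]
    [IsOrderedAddMonoid M] {C : M} {f : V → M} (hf : ∀ a b, G.Adj a b → |f a - f b| ≤ C)
    {x y : V} (h : G.Reachable x y) : |f x - f y| ≤ G.dist x y • C := by
  obtain ⟨p, hp⟩ := h.exists_walk_length_eq_dist
  rw [← hp]
  clear hp h
  induction p with
  | nil => simp
  | @cons x w y hxw q ih =>
    calc |f x - f y| ≤ |f x - f w| + |f w - f y| := abs_sub_le _ _ _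
      _ ≤ C + q.length • C := add_le_add (hf x w hxw) ih
      _ = (q.cons hxw).length • C := by rw [Walk.length_cons, succ_nsmul']

lemma connectedComponentMk_deleteEdges_eq {u v : V} (h : G.Adj u v) (huv : s(u, v) ∉ F) :
    (G.deleteEdges F).connectedComponentMk u = (G.deleteEdges F).connectedComponentMk v :=
  ConnectedComponent.eq.mpr (deleteEdges_adj.mpr ⟨h, huv⟩).reachable

lemma Walk.exists_quotientGraph_walk_length_le {x y : V} (p : G.Walk x y) :
    ∃ q : (quotientGraph G F).Walk ((G.deleteEdges F).connectedComponentMk x)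
      ((G.deleteEdges F).connectedComponentMk y), q.length ≤ p.edges.countP (· ∈ F) := by
  induction p with
  | nil => exact ⟨.nil, by simp⟩
  | @cons x w y h _ ih =>
    obtain ⟨q, hq⟩ := ih
    by_cases hxw : (G.deleteEdges F).connectedComponentMk x =
      (G.deleteEdges F).connectedComponentMk w
    · refine ⟨q.copy hxw.symm rfl, ?_⟩
      simp only [Walk.length_copy, Walk.edges_cons, List.countP_cons]
      omega
    · have hF : s(x, w) ∈ F := by
        by_contra hF
        exact hxw (connectedComponentMk_deleteEdges_eq h hF)
      refine ⟨.cons ⟨hxw, x, w, rfl, rfl, h⟩ q, ?_⟩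
      simp only [Walk.edges_cons, List.countP_cons, hF, decide_true, if_true]
      exact Nat.add_le_add_right hq 1

lemma Walk.dist_quotientGraph_le {x y : V} (p : G.Walk x y) :
    (quotientGraph G F).dist ((G.deleteEdges F).connectedComponentMk x)
      ((G.deleteEdges F).connectedComponentMk y) ≤ p.edges.countP (· ∈ F) := by
  obtain ⟨q, hq⟩ := p.exists_quotientGraph_walk_length_le (F := F)
  exact (dist_le q).trans hq

lemma Reachable.quotientGraph {x y : V} (h : G.Reachable x y) :
    (quotientGraph G F).Reachable ((G.deleteEdges F).connectedComponentMk x)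
      ((G.deleteEdges F).connectedComponentMk y) := by
  obtain ⟨p⟩ := h
  obtain ⟨q, -⟩ := p.exists_quotientGraph_walk_length_le (F := F)
  exact q.reachable

def Walk.potential (F : Set (Sym2 V)) {x y : V} (p : G.Walk x y) (z : V) : ℤ :=
  (p.darts.map fun D => if D.edge ∈ F then G.distDiff D.fst D.snd z else 0).sum

lemma Walk.sum_darts_ite_eq_countP_nsmul {M : Type*} [AddCommMonoid M] (F : Set (Sym2 V))
    {x y : V} (p : G.Walk x y) (c : M) :
    (p.darts.map fun D => if D.edge ∈ F then c else 0).sum = p.edges.countP (· ∈ F) • c := by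
  simp [List.sum_map_ite, List.countP_eq_length_filter, Walk.edges, List.filter_map,
    Function.comp_def]

lemma Walk.potential_start {x y : V} {p : G.Walk x y}
    (hp : p.length = G.dist x y) : p.potential F x = -(p.edges.countP (· ∈ F) : ℤ) := by
  rw [potential, List.map_congr_left fun D hD => by rw [distDiff_start_of_mem_darts hp hD],
    sum_darts_ite_eq_countP_nsmul, smul_neg, nsmul_one]

lemma Walk.potential_end {x y : V} {p : G.Walk x y}
    (hp : p.length = G.dist x y) : p.potential F y = p.edges.countP (· ∈ F) := by
  rw [potential, List.map_congr_left fun D hD => by rw [distDiff_end_of_mem_darts hp hD],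
    sum_darts_ite_eq_countP_nsmul, nsmul_one]

/-- `componentWeight (G.deleteEdges (F i)) w` and `quotientEdgeWeight G (F i) w'` are the
weights `λ_i` and `λ_i'` of `G_i = G / F_i`. -/
def componentWeight (H : SimpleGraph V) (w : V → NNReal) (X : H.ConnectedComponent) : NNReal :=
  ∑ᶠ x ∈ {x | H.connectedComponentMk x = X}, w x

def quotientEdgeWeight (G : SimpleGraph V) (F : Set (Sym2 V)) (w' : Sym2 V → NNReal)
    (E : Sym2 (G.deleteEdges F).ConnectedComponent) : NNReal :=
  ∑ᶠ e ∈ {e | e ∈ G.edgeSet ∧ Sym2.map (G.deleteEdges F).connectedComponentMk e = E}, w' e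

def edgeImbalance (G : SimpleGraph V) (w : V → NNReal) : Sym2 V → ℝ :=
  Sym2.lift ⟨fun u v => |(nW G w u v : ℝ) - nW G w v u|, fun _ _ => abs_sub_comm _ _⟩

lemma mostarW_eq_finsum_edgeImbalance (G : SimpleGraph V) (w : V → NNReal)
    (w' : Sym2 V → NNReal) :
    MostarW G w w' = ∑ᶠ e ∈ G.edgeSet, (w' e : ℝ) * G.edgeImbalance w e :=
  rfl

end SimpleGraph

def IsThetaClosed {V : Type*} (G : SimpleGraph V) (F : Set (Sym2 V)) : Prop :=
  ∀ e f, theta G e f → e ∈ F → f ∈ F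

namespace IsThetaClosed

variable {V : Type*} {G : SimpleGraph V} {F : Set (Sym2 V)}

lemma distDiff_eq_of_reachable (hF : IsThetaClosed G F) {a b : V} (hab : G.Adj a b)
    (habF : s(a, b) ∈ F) {x y : V} (h : (G.deleteEdges F).Reachable x y) :
    G.distDiff a b x = G.distDiff a b y := by
  obtain ⟨p⟩ := h
  induction p with
  | nil => rfl
  | @cons x z y hxz _ ih =>
    rw [← ih]
    by_contra hne
    have hxz' := deleteEdges_adj.mp hxz
    exact hxz'.2 (hF _ _ (theta_of_distDiff_ne hab hxz'.1 hne) habF)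

lemma connectedComponentMk_ne (hF : IsThetaClosed G F) {a b : V} (hab : G.Adj a b)
    (habF : s(a, b) ∈ F) :
    (G.deleteEdges F).connectedComponentMk a ≠ (G.deleteEdges F).connectedComponentMk b := by
  intro h
  have := hF.distDiff_eq_of_reachable hab habF (ConnectedComponent.eq.mp h)
  have := dist_eq_one_iff_adj.mpr hab
  have := dist_eq_one_iff_adj.mpr hab.symm
  simp only [distDiff, dist_self] at *
  omega

lemma quotientGraph_adj_iff (hF : IsThetaClosed G F) {a b : V} (hab : G.Adj a b) :
    (quotientGraph G F).Adj ((G.deleteEdges F).connectedComponentMk a)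
      ((G.deleteEdges F).connectedComponentMk b) ↔ s(a, b) ∈ F := by
  refine ⟨fun h => ?_, fun habF => ⟨hF.connectedComponentMk_ne hab habF, a, b, rfl, rfl, hab⟩⟩
  by_contra habF
  exact h.1 (connectedComponentMk_deleteEdges_eq hab habF)

lemma map_mem_edgeSet_quotientGraph_iff (hF : IsThetaClosed G F) {e : Sym2 V} (he : e ∈ G.edgeSet) :
    e.map (G.deleteEdges F).connectedComponentMk ∈ (quotientGraph G F).edgeSet ↔ e ∈ F := by
  induction e using Sym2.ind with
  | _ a b => exact hF.quotientGraph_adj_iff he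

lemma potential_eq_of_reachable (hF : IsThetaClosed G F) {x y : V} (p : G.Walk x y)
    {z z' : V} (h : (G.deleteEdges F).Reachable z z') : p.potential F z = p.potential F z' := by
  refine congrArg List.sum (List.map_congr_left fun D _ => ?_)
  split_ifs with hD
  · exact hF.distDiff_eq_of_reachable D.adj hD h
  · rfl

lemma potential_eq_add (hF : IsThetaClosed G F) {x y : V} (p : G.Walk x y) {c d : V}
    (hcd : G.Adj c d) (hcdF : s(c, d) ∈ F) :
    p.potential F c = p.potential F d + (G.distDiff c d x - G.distDiff c d y) := by
  rw [← p.sum_darts_sub (G.distDiff c d), Walk.potential, Walk.potential, ← List.sum_map_add]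
  refine congrArg List.sum (List.map_congr_left fun D _ => ?_)
  have hswap : G.distDiff D.fst D.snd c - G.distDiff D.fst D.snd d =
      G.distDiff c d D.fst - G.distDiff c d D.snd := by
    simp only [distDiff, dist_comm (u := c), dist_comm (u := d)]
    ring
  split_ifs with hD
  · linarith
  · by_contra hne
    refine hD (hF _ _ (theta_of_distDiff_ne hcd D.adj fun h => hne ?_) hcdF)
    linarith

lemma dist_quotientGraph_eq_countP (hF : IsThetaClosed G F) {x y : V} {p : G.Walk x y}
    (hp : p.length = G.dist x y) :
    (quotientGraph G F).dist ((G.deleteEdges F).connectedComponentMk x)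
      ((G.deleteEdges F).connectedComponentMk y) = p.edges.countP (· ∈ F) := by
  refine le_antisymm p.dist_quotientGraph_le ?_
  let Φ : (G.deleteEdges F).ConnectedComponent → ℤ :=
    ConnectedComponent.lift (p.potential F) fun _ _ q _ =>
      hF.potential_eq_of_reachable p q.reachable
  have hΦ : ∀ X Y, (quotientGraph G F).Adj X Y → |Φ X - Φ Y| ≤ 2 := by
    rintro _ _ ⟨hne, c, d, rfl, rfl, hcd⟩
    have hcdF : s(c, d) ∈ F := by
      by_contra hcdF
      exact hne (connectedComponentMk_deleteEdges_eq hcd hcdF)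
    have := abs_distDiff_le_one hcd x
    have := abs_distDiff_le_one hcd y
    simp only [Φ, ConnectedComponent.lift_mk, hF.potential_eq_add p hcd hcdF, abs_le] at *
    omega
  have := p.reachable.quotientGraph.abs_sub_le_dist_nsmul hΦ
  simp only [Φ, ConnectedComponent.lift_mk, p.potential_start hp, p.potential_end hp,
    nsmul_eq_mul, abs_le] at this
  omega

end IsThetaClosed

namespace IsEdgePartition

variable {V : Type*} {G : SimpleGraph V} {k : ℕ} {F : Fin k → Set (Sym2 V)}

lemma mem_iff_eq (hF : IsEdgePartition G F) {e : Sym2 V} {i j : Fin k} (hi : e ∈ F i) :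
    e ∈ F j ↔ j = i :=
  ⟨fun hj => by_contra fun hji => Set.disjoint_left.mp (hF.2.2 j i hji) hj hi, (· ▸ hi)⟩

lemma length_eq_sum_countP (hF : IsEdgePartition G F) {x y : V} (p : G.Walk x y) :
    p.length = ∑ i, p.edges.countP (· ∈ F i) := by
  induction p with
  | nil => simp
  | @cons x w y h q ih =>
    obtain ⟨i, hi⟩ := hF.2.1 s(x, w) h
    simp [List.countP_cons, Finset.sum_add_distrib, ← ih, hF.mem_iff_eq hi]

lemma finsum_mem_edgeSet {M : Type*} [AddCommMonoid M] [Finite V] (hF : IsEdgePartition G F)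
    (f : Sym2 V → M) : ∑ᶠ e ∈ G.edgeSet, f e = ∑ i, ∑ᶠ e ∈ F i, f e := by
  have hunion : G.edgeSet = ⋃ i, F i :=
    (Set.iUnion_subset hF.1).antisymm' fun e he => Set.mem_iUnion.mpr (hF.2.1 e he)
  rw [hunion, finsum_mem_iUnion (fun i j hij => hF.2.2 i j hij) fun _ => Set.toFinite _,
    finsum_eq_sum_of_fintype]

end IsEdgePartition

namespace IsCPartition

variable {V : Type*} {G : SimpleGraph V} {k : ℕ} {F : Fin k → Set (Sym2 V)}

lemma isThetaClosed (hF : IsCPartition G F) (i : Fin k) : IsThetaClosed G (F i) :=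
  fun e f h he => hF.2 e f (.single h) i he

theorem dist_eq_sum_dist_quotientGraph (hF : IsCPartition G F) {x y : V}
    (h : G.Reachable x y) :
    G.dist x y = ∑ i, (quotientGraph G (F i)).dist
      ((G.deleteEdges (F i)).connectedComponentMk x)
      ((G.deleteEdges (F i)).connectedComponentMk y) := by
  obtain ⟨p, hp⟩ := h.exists_walk_length_eq_dist
  rw [← hp, hF.1.length_eq_sum_countP p]
  exact Finset.sum_congr rfl fun i _ => ((hF.isThetaClosed i).dist_quotientGraph_eq_countP hp).symm

lemma distDiff_eq_distDiff_quotientGraph (hF : IsCPartition G F) (hG : G.Connected)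
    {i : Fin k} {u v : V} (huv : s(u, v) ∈ F i) (x : V) :
    G.distDiff u v x = (quotientGraph G (F i)).distDiff
      ((G.deleteEdges (F i)).connectedComponentMk u)
      ((G.deleteEdges (F i)).connectedComponentMk v)
      ((G.deleteEdges (F i)).connectedComponentMk x) := by
  have hj : ∀ j ≠ i, (G.deleteEdges (F j)).connectedComponentMk u =
      (G.deleteEdges (F j)).connectedComponentMk v := fun j hji =>
    connectedComponentMk_deleteEdges_eq (hF.1.1 i huv) fun hj => hji ((hF.1.mem_iff_eq huv).mp hj)
  simp only [distDiff, hF.dist_eq_sum_dist_quotientGraph (hG x u),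
    hF.dist_eq_sum_dist_quotientGraph (hG x v), Nat.cast_sum, ← Finset.sum_sub_distrib]
  rw [Finset.sum_eq_single_of_mem i (Finset.mem_univ i) fun j _ hji => by rw [hj j hji, sub_self]]

lemma nW_quotientGraph [Finite V] (hF : IsCPartition G F) (hG : G.Connected) (w : V → NNReal)
    {i : Fin k} {u v : V} (huv : s(u, v) ∈ F i) :
    nW (quotientGraph G (F i)) ((G.deleteEdges (F i)).componentWeight w)
      ((G.deleteEdges (F i)).connectedComponentMk u)
      ((G.deleteEdges (F i)).connectedComponentMk v) = nW G w u v := by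
  have hcloser : {x | G.dist x u < G.dist x v} = Set.univ ∩
      (G.deleteEdges (F i)).connectedComponentMk ⁻¹' {X | (quotientGraph G (F i)).dist X
        ((G.deleteEdges (F i)).connectedComponentMk u) < (quotientGraph G (F i)).dist X
        ((G.deleteEdges (F i)).connectedComponentMk v)} := by
    ext x
    have := hF.distDiff_eq_distDiff_quotientGraph hG huv x
    simp only [distDiff] at this
    simp only [Set.mem_ofPred_eq, Set.univ_inter, Set.mem_preimage]
    omega
  rw [nW, nW, hcloser, ← finsum_mem_fiberwise Set.finite_univ (Set.toFinite _)]
  simp only [Set.mem_univ, true_and, componentWeight]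

lemma edgeImbalance_quotientGraph_map [Finite V] (hF : IsCPartition G F) (hG : G.Connected)
    (w : V → NNReal) {i : Fin k} {e : Sym2 V} (he : e ∈ F i) :
    (quotientGraph G (F i)).edgeImbalance ((G.deleteEdges (F i)).componentWeight w)
      (e.map (G.deleteEdges (F i)).connectedComponentMk) = G.edgeImbalance w e := by
  induction e using Sym2.ind with
  | _ u v =>
    have hvu : s(v, u) ∈ F i := Sym2.eq_swap ▸ he
    simp only [Sym2.map_mk, edgeImbalance, Sym2.lift_mk, hF.nW_quotientGraph hG w he,
      hF.nW_quotientGraph hG w hvu]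

lemma mostarW_quotientGraph [Finite V] (hF : IsCPartition G F) (hG : G.Connected) (w : V → NNReal)
    (w' : Sym2 V → NNReal) (i : Fin k) :
    MostarW (quotientGraph G (F i)) ((G.deleteEdges (F i)).componentWeight w)
      (G.quotientEdgeWeight (F i) w') = ∑ᶠ e ∈ F i, (w' e : ℝ) * G.edgeImbalance w e := by
  have hmem := fun {e} (he : e ∈ G.edgeSet) =>
    (hF.isThetaClosed i).map_mem_edgeSet_quotientGraph_iff he
  have hFi : F i = G.edgeSet ∩
      Sym2.map (G.deleteEdges (F i)).connectedComponentMk ⁻¹' (quotientGraph G (F i)).edgeSet :=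
    Set.ext fun e => ⟨fun he => ⟨hF.1.1 i he, (hmem (hF.1.1 i he)).mpr he⟩,
      fun ⟨he, hE⟩ => (hmem he).mp hE⟩
  rw [mostarW_eq_finsum_edgeImbalance, finsum_mem_congr hFi fun _ _ => rfl,
    ← finsum_mem_fiberwise (Set.toFinite _) (Set.toFinite _)]
  refine finsum_mem_congr rfl fun E hE => ?_
  rw [quotientEdgeWeight, NNReal.coe_finsum_mem (Set.toFinite _), finsum_mem_mul]
  refine finsum_mem_congr rfl fun e ⟨he, heE⟩ => ?_
  rw [← heE, hF.edgeImbalance_quotientGraph_map hG w ((hmem he).mp (heE ▸ hE))]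

end IsCPartition

/-- the weighted Mostar index of a finite connected weighted graph
`(G, w, w')` equals the sum over a c-partition `{F₁, …, F_k}` of the weighted
Mostar indices of the quotient graphs `(G_i, λ_i, λ_i')`, where
`λ_i(X) = Σ_{x ∈ X} w(x)` and `λ_i'(E) = Σ_{e ∈ Ê} w'(e)`. -/
theorem mostarW_eq_sum_quotients {V : Type*} [Fintype V] (G : SimpleGraph V)
    (hG : G.Connected) (w : V → NNReal) (w' : Sym2 V → NNReal) {k : ℕ}
    (F : Fin k → Set (Sym2 V)) (hF : IsCPartition G F) :
    MostarW G w w' = ∑ i : Fin k,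
      MostarW (quotientGraph G (F i))
        (fun X => ∑ᶠ x ∈ {x : V |
            (G.deleteEdges (F i)).connectedComponentMk x = X}, w x)
        (fun E => ∑ᶠ e ∈ {e : Sym2 V | e ∈ G.edgeSet ∧
            Sym2.map ((G.deleteEdges (F i)).connectedComponentMk) e = E},
          w' e) := by
  rw [mostarW_eq_finsum_edgeImbalance, hF.1.finsum_mem_edgeSet]
  exact Finset.sum_congr rfl fun i _ => (hF.mostarW_quotientGraph hG w w' i).symm
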